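/- For every v ∈ H with 𝐈v = v one has 2Tv = (3Y₋ − id)(𝐉v) = 𝐉(3Y₊v − v). -/

import Mathlib

noncomputable section

abbrev SL2Z := Matrix.SpecialLinearGroup (Fin 2) ℤ

def Lmat : SL2Z := ⟨!![1, 1; 0, 1], by decide⟩
def Rmat : SL2Z := ⟨!![1, 0; 1, 1], by decide⟩
def Jmat : SL2Z := ⟨!![0, 1; -1, 0], by decide⟩
def Imat : SL2Z := ⟨!![-1, 0; 0, -1], by decide⟩

variable {H : Type*} [NormedAddCommGroup H] [InnerProductSpace ℂ H] [CompleteSpace H]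

/-- The bounded operator associated to a group element by the unitary representation. -/
def rop (ρ : SL2Z →* unitary (H →L[ℂ] H)) (g : SL2Z) : H →L[ℂ] H := (ρ g : H →L[ℂ] H)

/-- The Markov operator T = (𝐋 + 𝐑)/2. -/
def opT (ρ : SL2Z →* unitary (H →L[ℂ] H)) : H →L[ℂ] H := (2 : ℂ)⁻¹ • (rop ρ Lmat + rop ρ Rmat)

/-- Y₊ = (1/3)((3/2)·id − (1/2)𝐈 + 𝐑⁻¹𝐋 + 𝐋⁻¹𝐑). -/
def opYp (ρ : SL2Z →* unitary (H →L[ℂ] H)) : H →L[ℂ] H :=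
  (3 : ℂ)⁻¹ • ((3 / 2 : ℂ) • (1 : H →L[ℂ] H) - (2 : ℂ)⁻¹ • rop ρ Imat
    + rop ρ Rmat⁻¹ * rop ρ Lmat + rop ρ Lmat⁻¹ * rop ρ Rmat)

/-- Y₋ = 𝐉* Y₊ 𝐉. -/
def opYm (ρ : SL2Z →* unitary (H →L[ℂ] H)) : H →L[ℂ] H :=
  ContinuousLinearMap.adjoint (rop ρ Jmat) * opYp ρ * rop ρ Jmat

/-!
Since `-1` is central and `J² = -1`, hence `J⁻¹ = J·(-1)`, the conjugation defining `Y₋` cancels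
against `𝐉`: `Y₋𝐉 = 𝐉Y₊`, which reduces the first identity to the second. On vectors fixed by `𝐈`,
`3Y₊ - id` acts as `𝐑⁻¹𝐋 + 𝐋⁻¹𝐑`, and in `SL(2,ℤ)` one has `J·R⁻¹L = R·(-1)` and `J·L⁻¹R = L`,
so `𝐉(3Y₊v - v) = 𝐑v + 𝐋v = 2Tv`.
-/

namespace SL2Z

lemma Imat_eq_neg_one : Imat = -1 := Subtype.ext (by decide)

lemma Imat_mul_Imat : Imat * Imat = 1 := by
  rw [Imat_eq_neg_one, neg_one_mul, neg_neg]

lemma commute_Imat (g : SL2Z) : Commute Imat g := by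
  rw [Imat_eq_neg_one]
  exact Commute.neg_one_left g

lemma Jmat_mul_Jmat : Jmat * Jmat = Imat := Subtype.ext (by decide)

lemma Jmat_inv : Jmat⁻¹ = Jmat * Imat := Subtype.ext (by decide)

lemma Jmat_mul_Rmat_inv_mul_Lmat : Jmat * (Rmat⁻¹ * Lmat) = Rmat * Imat := Subtype.ext (by decide)

lemma Jmat_mul_Lmat_inv_mul_Rmat : Jmat * (Lmat⁻¹ * Rmat) = Lmat := Subtype.ext (by decide)

end SL2Z

open SL2Z ContinuousLinearMap

section Representation

variable (ρ : SL2Z →* unitary (H →L[ℂ] H))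

lemma rop_one : rop ρ 1 = 1 := by
  simp [rop]

lemma rop_mul (g h : SL2Z) : rop ρ (g * h) = rop ρ g * rop ρ h := by
  simp [rop]

lemma rop_mul_apply (g h : SL2Z) (w : H) : rop ρ (g * h) w = rop ρ g (rop ρ h w) := by
  rw [rop_mul, mul_apply_eq_comp]

lemma adjoint_rop (g : SL2Z) : adjoint (rop ρ g) = rop ρ g⁻¹ := by
  rw [← star_eq_adjoint, rop, rop, map_inv, ← Unitary.star_eq_inv, ← Unitary.coe_star]

lemma commute_rop_Imat (g : SL2Z) : Commute (rop ρ Imat) (rop ρ g) := by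
  rw [Commute, SemiconjBy, ← rop_mul, ← rop_mul, (commute_Imat g).eq]

lemma commute_rop_Imat_opYp : Commute (rop ρ Imat) (opYp ρ) := by
  unfold opYp
  apply_rules [Commute.smul_right, Commute.add_right, Commute.sub_right, Commute.mul_right,
    Commute.one_right, commute_rop_Imat]

lemma opYm_mul_rop_Jmat : opYm ρ * rop ρ Jmat = rop ρ Jmat * opYp ρ :=
  calc opYm ρ * rop ρ Jmat = rop ρ Jmat⁻¹ * opYp ρ * rop ρ Imat := by
        rw [opYm, adjoint_rop, mul_assoc, ← rop_mul, Jmat_mul_Jmat]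
    _ = rop ρ Jmat * opYp ρ * (rop ρ Imat * rop ρ Imat) := by
        rw [Jmat_inv, rop_mul, mul_assoc (rop ρ Jmat), (commute_rop_Imat_opYp ρ).eq]
        noncomm_ring
    _ = rop ρ Jmat * opYp ρ := by
        rw [← rop_mul, Imat_mul_Imat, rop_one, mul_one]

lemma two_smul_opT_apply (v : H) : (2 : ℂ) • opT ρ v = rop ρ Lmat v + rop ρ Rmat v := by
  rw [opT, smul_apply, smul_smul]
  norm_num

lemma three_smul_opYp_apply_sub_self {v : H} (hv : rop ρ Imat v = v) :
    (3 : ℂ) • opYp ρ v - v = rop ρ (Rmat⁻¹ * Lmat) v + rop ρ (Lmat⁻¹ * Rmat) v := by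
  simp only [opYp, smul_apply, add_apply, sub_apply, mul_apply_eq_comp, one_apply_eq_self,
    rop_mul_apply, hv]
  module

end Representation

/-- For every v ∈ H with 𝐈v = v one has 2Tv = (3Y₋ − id)(𝐉v) = 𝐉(3Y₊v − v). -/
theorem two_T_eq_on_Hplus (ρ : SL2Z →* unitary (H →L[ℂ] H))
    (v : H) (hv : rop ρ Imat v = v) :
    (2 : ℂ) • opT ρ v = (3 : ℂ) • opYm ρ (rop ρ Jmat v) - rop ρ Jmat v ∧
    (2 : ℂ) • opT ρ v = rop ρ Jmat ((3 : ℂ) • opYp ρ v - v) := by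
  have hJYp : rop ρ Jmat ((3 : ℂ) • opYp ρ v - v) = rop ρ Lmat v + rop ρ Rmat v := by
    rw [three_smul_opYp_apply_sub_self ρ hv, map_add, ← rop_mul_apply, ← rop_mul_apply,
      Jmat_mul_Rmat_inv_mul_Lmat, Jmat_mul_Lmat_inv_mul_Rmat, rop_mul_apply, hv, add_comm]
  have hYm : (3 : ℂ) • opYm ρ (rop ρ Jmat v) - rop ρ Jmat v
      = rop ρ Jmat ((3 : ℂ) • opYp ρ v - v) := by
    rw [← mul_apply_eq_comp, opYm_mul_rop_Jmat, mul_apply_eq_comp, map_sub, map_smul]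
  rw [hYm, hJYp, two_smul_opT_apply]
  exact ⟨rfl, rfl⟩
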